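/- arXiv:2602.06569 — 3 statements merged into one kernel-verified Lean document; each statement's English description precedes it below -/
import Mathlib

section
/- Let P, P₁ be symmetric n×n matrices, and let A, A₁ be n×n matrices. If the 3×3 block matrix [[P−P₁, 0, A⊤],[0, P₁, A₁⊤],[A, A₁, P⁻¹]] is positive semidefinite and P is positive definite, then for all vectors x, x_h ∈ ℝⁿ: x⊤(A⊤PA − P + P₁)x + 2·x_h⊤(A₁⊤PA)x + x_h⊤(A₁⊤PA₁ − P₁)x_h ≤ 0. -/
open Matrix

theorem stmt_3 {n : ℕ} (P P₁ A A₁ : Matrix (Fin n) (Fin n) ℝ)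
    (hP : P.PosDef) (hP₁ : P₁.IsHermitian)
    (h : (Matrix.fromBlocks
        (Matrix.fromBlocks (P - P₁) 0 0 P₁)
        (Matrix.fromRows Aᵀ A₁ᵀ)
        (Matrix.fromCols A A₁)
        P⁻¹).PosSemidef) :
    ∀ x x_h : Fin n → ℝ,
      x ⬝ᵥ ((Aᵀ * P * A - P + P₁) *ᵥ x)
        + 2 * (x_h ⬝ᵥ ((A₁ᵀ * P * A) *ᵥ x))
        + x_h ⬝ᵥ ((A₁ᵀ * P * A₁ - P₁) *ᵥ x_h) ≤ 0 := by
  intro x x_h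
  have hPsym : Pᵀ = P := hP.isHermitian.eq
  set u : Fin n → ℝ := A *ᵥ x + A₁ *ᵥ x_h with hu
  set w : Fin n → ℝ := -(P *ᵥ u) with hw
  have key := h.dotProduct_mulVec_nonneg (Sum.elim (Sum.elim x x_h) w)
  have hinv : P⁻¹ *ᵥ (P *ᵥ u) = u := by
    rw [Matrix.mulVec_mulVec, Matrix.nonsing_inv_mul P (isUnit_iff_ne_zero.2 hP.det_pos.ne'), Matrix.one_mulVec]
  simp only [star_trivial, Matrix.fromBlocks_mulVec, Matrix.fromRows_mulVec,
    Matrix.fromCols_mulVec_sumElim, Sum.elim_comp_inl, Sum.elim_comp_inr,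
    sumElim_dotProduct_sumElim, Matrix.mulVec_neg, hinv,
    Matrix.fromBlocks_mulVec] at key
  -- key : 0 ≤ ...
  have e1 : x ⬝ᵥ (Aᵀ *ᵥ w) = (A *ᵥ x) ⬝ᵥ w := by
    rw [Matrix.dotProduct_mulVec, Matrix.vecMul_transpose]
  have e2 : x_h ⬝ᵥ (A₁ᵀ *ᵥ w) = (A₁ *ᵥ x_h) ⬝ᵥ w := by
    rw [Matrix.dotProduct_mulVec, Matrix.vecMul_transpose]
  have e3 : x ⬝ᵥ ((Aᵀ * P * A) *ᵥ x) = (A *ᵥ x) ⬝ᵥ (P *ᵥ (A *ᵥ x)) := by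
    rw [← Matrix.mulVec_mulVec, ← Matrix.mulVec_mulVec, Matrix.dotProduct_mulVec,
      Matrix.vecMul_transpose]
  have e4 : x_h ⬝ᵥ ((A₁ᵀ * P * A) *ᵥ x) = (A₁ *ᵥ x_h) ⬝ᵥ (P *ᵥ (A *ᵥ x)) := by
    rw [← Matrix.mulVec_mulVec, ← Matrix.mulVec_mulVec, Matrix.dotProduct_mulVec,
      Matrix.vecMul_transpose]
  have e5 : x_h ⬝ᵥ ((A₁ᵀ * P * A₁) *ᵥ x_h) = (A₁ *ᵥ x_h) ⬝ᵥ (P *ᵥ (A₁ *ᵥ x_h)) := by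
    rw [← Matrix.mulVec_mulVec, ← Matrix.mulVec_mulVec, Matrix.dotProduct_mulVec,
      Matrix.vecMul_transpose]
  have esym : (A *ᵥ x) ⬝ᵥ (P *ᵥ (A₁ *ᵥ x_h)) = (A₁ *ᵥ x_h) ⬝ᵥ (P *ᵥ (A *ᵥ x)) := by
    rw [Matrix.dotProduct_mulVec, ← Matrix.mulVec_transpose, hPsym, dotProduct_comm]
  simp only [Matrix.sub_mulVec, Matrix.add_mulVec, dotProduct_add,
    dotProduct_sub, Matrix.mulVec_add, add_dotProduct, hu] at key ⊢
  rw [e3, e4, e5]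
  rw [hw] at key e1 e2
  simp only [Matrix.mulVec_neg, hinv, Matrix.mulVec_add, Matrix.zero_mulVec,
    dotProduct_neg, neg_dotProduct, dotProduct_add,
    add_dotProduct, dotProduct_zero, zero_dotProduct,
    neg_dotProduct, dotProduct_neg] at key e1 e2 ⊢
  simp only [sumElim_dotProduct_sumElim, dotProduct_neg,
    dotProduct_sub, dotProduct_add, dotProduct_zero, add_zero,
    zero_add, neg_neg, e1, e2] at key
  have c1 : P *ᵥ u ⬝ᵥ A *ᵥ x = A *ᵥ x ⬝ᵥ P *ᵥ u := dotProduct_comm _ _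
  have c2 : P *ᵥ u ⬝ᵥ A₁ *ᵥ x_h = A₁ *ᵥ x_h ⬝ᵥ P *ᵥ u := dotProduct_comm _ _
  have c3 : P *ᵥ u ⬝ᵥ u = u ⬝ᵥ P *ᵥ u := dotProduct_comm _ _
  rw [c1, c2, c3, hu] at key
  simp only [Matrix.mulVec_add, dotProduct_add, add_dotProduct, esym] at key
  linarith [key]
end

section
/- Suppose B : X^{h+1} → ℝ≥0 satisfies B(𝐱) ≥ γ_b for all 𝐱 ∈ X_b × (X∖X_b)^h, and (𝐱_k) is a stochastic process in X^{h+1} with B(𝐱_0) ≤ γ_a a.s. and E[B(𝐱_{k+1}) | 𝐱_k] ≤ B(𝐱_k) + η. Then ℙ( 𝐱_k ∉ X_b × (X∖X_b)^h for all k ∈ {1,…,T} ) ≥ 1 − (γ_a + η·T)/γ_b. -/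
open MeasureTheory Finset
open scoped NNReal ENNReal ProbabilityTheory MeasureTheory

theorem super_maximal_aux {Ω : Type*} {m0 : MeasurableSpace Ω} {μ : Measure Ω}
    [IsFiniteMeasure μ] {𝒢 : Filtration ℕ m0} {f : ℕ → Ω → ℝ}
    (hsup : Supermartingale f 𝒢 μ) (hnonneg : ∀ k ω, 0 ≤ f k ω) {ε : ℝ≥0} (n : ℕ) :
    ε • μ {ω | (ε : ℝ) ≤ (range (n + 1)).sup' nonempty_range_add_one fun k => f k ω} ≤
      ENNReal.ofReal (μ[f 0]) := by
  set τ : Ω → WithTop ℕ := fun ω ↦ ((hittingBtwn f {y : ℝ | (ε : ℝ) ≤ y} 0 n ω : ℕ) : WithTop ℕ) with hτdef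
  have hτ : IsStoppingTime 𝒢 τ :=
    hsup.stronglyAdapted.adapted.isStoppingTime_hittingBtwn measurableSet_Ici
  have hsvneg : stoppedValue (-f) τ = -stoppedValue f τ := by
    funext ω; simp [stoppedValue]
  have hsv : Integrable (stoppedValue f τ) μ := by
    have := hsup.neg.integrable_stoppedValue hτ (fun ω => WithTop.coe_le_coe.2 (hittingBtwn_le (u := f) (s := {y : ℝ | (ε : ℝ) ≤ y}) (n := 0) ω))
    rw [hsvneg] at this
    simpa using this.neg
  have hn : Set.Icc 0 n = {k | k ≤ n} := by ext x; simp
  have hmeas : MeasurableSet {ω | (ε : ℝ) ≤ (range (n + 1)).sup' nonempty_range_add_one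
      fun k => f k ω} :=
    measurableSet_le measurable_const (Finset.measurable_range_sup'' fun k _ =>
      ((hsup.stronglyAdapted k).measurable).le (𝒢.le k))
  have hval : ∀ ω, ((ε : ℝ) ≤ (range (n + 1)).sup' nonempty_range_add_one fun k => f k ω) →
      (ε : ℝ) ≤ stoppedValue f τ ω := by
    intro ω hx
    simp_rw [le_sup'_iff, mem_range, Nat.lt_succ_iff] at hx
    refine stoppedValue_hittingBtwn_mem ?_
    simp only [Set.mem_setOf_eq, exists_prop, hn]
    exact let ⟨j, hj₁, hj₂⟩ := hx; ⟨j, hj₁, hj₂⟩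
  have h1 := setIntegral_ge_of_const_le_real hmeas (measure_ne_top _ _) hval hsv.integrableOn
  have h2 : ∫ ω in {ω | (ε : ℝ) ≤ (range (n + 1)).sup' nonempty_range_add_one fun k => f k ω},
      stoppedValue f τ ω ∂μ ≤ ∫ ω, stoppedValue f τ ω ∂μ :=
    setIntegral_le_integral hsv (Filter.Eventually.of_forall fun ω => hnonneg _ _)
  have h3 : ∫ ω, stoppedValue f τ ω ∂μ ≤ μ[f 0] := by
    have := hsup.neg.expected_stoppedValue_mono (isStoppingTime_const 𝒢 0) hτ
      (fun ω => WithTop.coe_le_coe.2 zero_le) (fun ω => WithTop.coe_le_coe.2 (hittingBtwn_le (u := f) (s := {y : ℝ | (ε : ℝ) ≤ y}) (n := 0) ω))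
    rw [hsvneg] at this
    have h0 : stoppedValue (-f) (fun _ => WithTop.some (0 : ℕ)) = -f 0 := by
      funext ω; simp [stoppedValue]
    rw [h0] at this
    simp only [Pi.neg_apply, integral_neg, neg_le_neg_iff] at this
    exact this
  calc ε • μ {ω | (ε : ℝ) ≤ (range (n + 1)).sup' nonempty_range_add_one fun k => f k ω}
      ≤ ENNReal.ofReal (∫ ω in {ω | (ε : ℝ) ≤ (range (n + 1)).sup' nonempty_range_add_one
          fun k => f k ω}, stoppedValue f τ ω ∂μ) := by
        rw [ENNReal.le_ofReal_iff_toReal_le, ENNReal.toReal_smul]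
        · exact h1
        · exact ENNReal.mul_ne_top (by simp) (measure_ne_top _ _)
        · exact le_trans (mul_nonneg ε.coe_nonneg ENNReal.toReal_nonneg) h1
    _ ≤ ENNReal.ofReal (μ[f 0]) := ENNReal.ofReal_le_ofReal (h2.trans h3)

open MeasureTheory in
theorem stmt_13 {Ω : Type*} {m0 : MeasurableSpace Ω} (μ : Measure Ω)
    [IsProbabilityMeasure μ]
    {S : Type*} (X Xb : Set S) (hXbX : Xb ⊆ X) (h : ℕ) (hh : 1 ≤ h)
    (B : (Fin (h + 1) → S) → ℝ) (hBnn : ∀ v, 0 ≤ B v)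
    (γa γb η : ℝ) (hγa : 0 < γa) (hab : γa < γb) (hη : 0 ≤ η) (T : ℕ)
    (hlevel : ∀ v : Fin (h + 1) → S,
      (v 0 ∈ Xb ∧ ∀ i, i ≠ 0 → v i ∈ X \ Xb) → γb ≤ B v)
    (ℱ : Filtration ℕ m0)
    (x : ℕ → Ω → (Fin (h + 1) → S))
    (hint : ∀ k, Integrable (fun ω => B (x k ω)) μ)
    (hadp : ∀ k, StronglyMeasurable[ℱ k] (fun ω => B (x k ω)))
    (h0 : ∀ᵐ ω ∂μ, B (x 0 ω) ≤ γa)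
    (hdrift : ∀ k, μ[(fun ω => B (x (k + 1) ω))|ℱ k] ≤ᵐ[μ] fun ω => B (x k ω) + η) :
    ENNReal.ofReal (1 - (γa + η * T) / γb)
      ≤ μ {ω | ∀ k ∈ Finset.Icc 1 T,
          ¬(x k ω 0 ∈ Xb ∧ ∀ i, i ≠ 0 → x k ω i ∈ X \ Xb)} := by
  have hγb : (0 : ℝ) < γb := hγa.trans hab
  -- the drifted, stopped process
  set W : ℕ → Ω → ℝ := fun k ω => B (x (min k T) ω) + η * ((T - k : ℕ) : ℝ) with hWdef
  have hWadp : StronglyAdapted ℱ W := fun k =>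
    ((hadp (min k T)).mono (ℱ.mono (min_le_left k T))).add stronglyMeasurable_const
  have hWint : ∀ k, Integrable (W k) μ := fun k => (hint _).add (integrable_const _)
  have hWnn : ∀ k ω, 0 ≤ W k ω := fun k ω =>
    add_nonneg (hBnn _) (mul_nonneg hη (Nat.cast_nonneg _))
  have hWsup : Supermartingale W ℱ μ := by
    refine supermartingale_nat hWadp hWint fun i => ?_
    rcases le_or_gt T i with hTi | hiT
    · have hW : W (i + 1) = W i := by
        funext ω
        have h1 : min (i + 1) T = T := min_eq_right (hTi.trans (Nat.le_succ i))
        have h2 : min i T = T := min_eq_right hTi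
        have h3 : T - (i + 1) = 0 := Nat.sub_eq_zero_of_le (hTi.trans (Nat.le_succ i))
        have h4 : T - i = 0 := Nat.sub_eq_zero_of_le hTi
        simp [hWdef, h1, h2, h3, h4]
      rw [hW]
      exact Filter.EventuallyEq.le (Filter.EventuallyEq.of_eq
        (condExp_of_stronglyMeasurable (ℱ.le i) (hWadp i) (hWint i)))
    · have h1 : min (i + 1) T = i + 1 := min_eq_left hiT
      have h2 : min i T = i := min_eq_left hiT.le
      have hWsplit : W (i + 1) =
          (fun ω => B (x (i + 1) ω)) + fun _ => η * ((T - (i + 1) : ℕ) : ℝ) := by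
        funext ω; simp [hWdef, h1]
      have hc : μ[W (i + 1)|ℱ i] =ᵐ[μ]
          (μ[(fun ω => B (x (i + 1) ω))|ℱ i]) + fun _ => η * ((T - (i + 1) : ℕ) : ℝ) := by
        rw [hWsplit]
        refine (condExp_add (hint _) (integrable_const _) _).trans ?_
        rw [condExp_const (ℱ.le i)]
      filter_upwards [hc, hdrift i] with ω hω₁ hω₂
      rw [hω₁]
      have hcast : ((T - i : ℕ) : ℝ) = ((T - (i + 1) : ℕ) : ℝ) + 1 := by
        have : T - i = (T - (i + 1)) + 1 := by omega
        rw [this]; push_cast; ring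
      simp only [Pi.add_apply, hWdef, h2]
      have := hω₂
      rw [hcast]; nlinarith [this]
  -- the maximal set
  set A : Set Ω := {ω | ((γb.toNNReal : ℝ≥0) : ℝ) ≤
    (Finset.range (T + 1)).sup' Finset.nonempty_range_add_one fun k => W k ω} with hAdef
  have hAmeas : MeasurableSet A :=
    measurableSet_le measurable_const (Finset.measurable_range_sup'' fun k _ =>
      ((hWadp k).measurable).le (ℱ.le k))
  have hγbcoe : ((γb.toNNReal : ℝ≥0) : ℝ) = γb := Real.coe_toNNReal _ hγb.le
  have hkey : (γb.toNNReal : ℝ≥0) • μ A ≤ ENNReal.ofReal (μ[W 0]) :=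
    super_maximal_aux hWsup hWnn T
  -- integral bound
  have hEW0 : μ[W 0] ≤ γa + η * T := by
    have hμuniv : (μ Set.univ).toReal = 1 := by simp
    calc μ[W 0] ≤ ∫ _, γa + η * T ∂μ := by
          refine integral_mono_ae (hWint 0) (integrable_const _) ?_
          filter_upwards [h0] with ω hω
          simp only [hWdef, Nat.zero_min, Nat.sub_zero]
          linarith
      _ = γa + η * T := by rw [integral_const, measureReal_def, hμuniv, one_smul]
  -- bad event is contained in A
  have hsub : {ω | ∃ k ∈ Finset.Icc 1 T,
      (x k ω 0 ∈ Xb ∧ ∀ i, i ≠ 0 → x k ω i ∈ X \ Xb)} ⊆ A := by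
    rintro ω ⟨k, hk, hP⟩
    rw [Finset.mem_Icc] at hk
    have hγbB : γb ≤ B (x k ω) := hlevel _ hP
    have hkT : min k T = k := min_eq_left hk.2
    have hWk : γb ≤ W k ω := by
      simp only [hWdef, hkT]
      have : 0 ≤ η * ((T - k : ℕ) : ℝ) := mul_nonneg hη (Nat.cast_nonneg _)
      linarith
    rw [hAdef, Set.mem_setOf_eq, hγbcoe]
    exact hWk.trans (Finset.le_sup' (fun k => W k ω)
      (Finset.mem_range.2 (Nat.lt_succ_of_le hk.2)))
  -- conclude
  have hμA : μ A ≤ ENNReal.ofReal ((γa + η * T) / γb) := by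
    have h1 : ENNReal.ofReal ((γa + η * T) / γb) =
        ENNReal.ofReal (γa + η * T) / ENNReal.ofReal γb :=
      ENNReal.ofReal_div_of_pos hγb
    rw [h1, ENNReal.le_div_iff_mul_le (Or.inl (by simpa using hγb)) (Or.inl ENNReal.ofReal_ne_top)]
    have : ENNReal.ofReal γb = ((γb.toNNReal : ℝ≥0) : ℝ≥0∞) := rfl
    rw [mul_comm, this]
    calc ((γb.toNNReal : ℝ≥0) : ℝ≥0∞) * μ A = (γb.toNNReal : ℝ≥0) • μ A := rfl
      _ ≤ ENNReal.ofReal (μ[W 0]) := hkey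
      _ ≤ ENNReal.ofReal (γa + η * T) := ENNReal.ofReal_le_ofReal hEW0
  have hcompl : Aᶜ ⊆ {ω | ∀ k ∈ Finset.Icc 1 T,
      ¬(x k ω 0 ∈ Xb ∧ ∀ i, i ≠ 0 → x k ω i ∈ X \ Xb)} := by
    intro ω hω k hk hP
    exact hω (hsub ⟨k, hk, hP⟩)
  calc ENNReal.ofReal (1 - (γa + η * T) / γb)
      = 1 - ENNReal.ofReal ((γa + η * T) / γb) := by
        rw [ENNReal.ofReal_sub _ (div_nonneg (by positivity) hγb.le), ENNReal.ofReal_one]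
    _ ≤ 1 - μ A := tsub_le_tsub_left hμA 1
    _ = μ Aᶜ := (prob_compl_eq_one_sub hAmeas).symm
    _ ≤ _ := measure_mono hcompl
end

section
/- Let P be symmetric positive definite and P̃₁ symmetric positive semidefinite, and let A, A₁, G, F, F₁ be real matrices of compatible dimensions. Set Z = F·P⁻¹ and Z₁ = F₁·P⁻¹. If the block matrix [[P⁻¹ − P̃₁, 0, P⁻¹A⊤ + Z⊤G⊤],[0, P̃₁, P⁻¹A₁⊤ + Z₁⊤G⊤],[(A+GF)P⁻¹, (A₁+GF₁)P⁻¹, P⁻¹]] is positive semidefinite, then for all x, x_h ∈ ℝⁿ, with P₁ := P·P̃₁·P: x⊤((A+GF)⊤P(A+GF) − P + P₁)x + 2 x_h⊤(A₁+GF₁)⊤P(A+GF)x + x_h⊤((A₁+GF₁)⊤P(A₁+GF₁) − P₁)x_h ≤ 0. -/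
open Matrix

theorem stmt_14 {n m : ℕ} (P Pt₁ A A₁ : Matrix (Fin n) (Fin n) ℝ)
    (G : Matrix (Fin n) (Fin m) ℝ) (F F₁ : Matrix (Fin m) (Fin n) ℝ)
    (hP : P.PosDef) (hPt₁ : Pt₁.PosSemidef)
    (Z : Matrix (Fin m) (Fin n) ℝ) (hZ : Z = F * P⁻¹)
    (Z₁ : Matrix (Fin m) (Fin n) ℝ) (hZ₁ : Z₁ = F₁ * P⁻¹)
    (h : (Matrix.fromBlocks
        (Matrix.fromBlocks (P⁻¹ - Pt₁) 0 0 Pt₁)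
        (Matrix.fromRows (P⁻¹ * Aᵀ + Zᵀ * Gᵀ) (P⁻¹ * A₁ᵀ + Z₁ᵀ * Gᵀ))
        (Matrix.fromCols ((A + G * F) * P⁻¹) ((A₁ + G * F₁) * P⁻¹))
        P⁻¹).PosSemidef) :
    ∀ x x_h : Fin n → ℝ,
      x ⬝ᵥ (((A + G * F)ᵀ * P * (A + G * F) - P + P * Pt₁ * P) *ᵥ x)
        + 2 * (x_h ⬝ᵥ (((A₁ + G * F₁)ᵀ * P * (A + G * F)) *ᵥ x))
        + x_h ⬝ᵥ (((A₁ + G * F₁)ᵀ * P * (A₁ + G * F₁) - P * Pt₁ * P) *ᵥ x_h)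
        ≤ 0 := by
  intro x x_h
  have hPdet : IsUnit P.det := isUnit_iff_ne_zero.mpr hP.det_pos.ne'
  have h1 : P⁻¹ * P = 1 := nonsing_inv_mul P hPdet
  have h2 : P * P⁻¹ = 1 := mul_nonsing_inv P hPdet
  have hPsym : Pᵀ = P := hP.1
  have hPis : (P⁻¹)ᵀ = P⁻¹ := by rw [transpose_nonsing_inv, hPsym]
  have hswap : ∀ (M : Matrix (Fin n) (Fin n) ℝ) (a b : Fin n → ℝ),
      (M *ᵥ a) ⬝ᵥ b = a ⬝ᵥ (Mᵀ *ᵥ b) := by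
    intro M a b
    rw [dotProduct_mulVec, vecMul_transpose, dotProduct_comm]
  set L := A + G * F with hL
  set L₁ := A₁ + G * F₁ with hL₁
  have hB1 : P⁻¹ * Aᵀ + Zᵀ * Gᵀ = P⁻¹ * Lᵀ := by
    rw [hZ, hL, transpose_add, transpose_mul, transpose_mul, hPis, Matrix.mul_add,
      Matrix.mul_assoc]
  have hB2 : P⁻¹ * A₁ᵀ + Z₁ᵀ * Gᵀ = P⁻¹ * L₁ᵀ := by
    rw [hZ₁, hL₁, transpose_add, transpose_mul, transpose_mul, hPis, Matrix.mul_add,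
      Matrix.mul_assoc]
  rw [hB1, hB2] at h
  set s := L *ᵥ x + L₁ *ᵥ x_h with hs
  have key := h.dotProduct_mulVec_nonneg ((P *ᵥ x ⊕ᵥ P *ᵥ x_h) ⊕ᵥ (-(P *ᵥ s)))
  simp only [star_trivial, fromBlocks_mulVec, fromRows_mulVec, fromCols_mulVec_sumElim,
    sumElim_dotProduct_sumElim, Sum.elim_comp_inl, Sum.elim_comp_inr,
    mulVec_neg, dotProduct_neg, neg_dotProduct, dotProduct_add, add_dotProduct,
    Matrix.sub_mulVec, Matrix.add_mulVec, dotProduct_sub, sub_dotProduct,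
    Matrix.zero_mulVec, dotProduct_zero, zero_dotProduct, add_zero, zero_add,
    Matrix.one_mulVec, neg_neg] at key
  have hcan1 : ∀ (X : Matrix (Fin n) (Fin n) ℝ), P * (P⁻¹ * X) = X := by
    intro X; rw [← Matrix.mul_assoc, h2, Matrix.one_mul]
  have hcan2 : ∀ (X : Matrix (Fin n) (Fin n) ℝ), P⁻¹ * (P * X) = X := by
    intro X; rw [← Matrix.mul_assoc, h1, Matrix.one_mul]
  simp only [hswap, hPsym, hs, mulVec_add, dotProduct_add, add_dotProduct,
    mulVec_mulVec, Matrix.mul_assoc, hcan1, hcan2, transpose_mul, h1, h2,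
    Matrix.mul_one, Matrix.one_mul, Matrix.one_mulVec] at key
  have hcross : x ⬝ᵥ (Lᵀ * (P * L₁)) *ᵥ x_h = x_h ⬝ᵥ (L₁ᵀ * (P * L)) *ᵥ x := by
    rw [dotProduct_comm, hswap]
    simp only [transpose_mul, transpose_transpose, hPsym, Matrix.mul_assoc]
  simp only [Matrix.sub_mulVec, Matrix.add_mulVec, dotProduct_sub, dotProduct_add,
    Matrix.mul_assoc]
  linarith [key, hcross]
end
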